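/- Let b be uniformly distributed on the closed ball B_p(0,r) ⊂ ℂ^p of radius r > 0. Then for every u ∈ ℂ^p with u ≠ 0, every v ∈ ℂ, and every δ > 0: P[ |b* u + v| < δ ] ≤ (π V_{p−1}(r) / V_p(r)) · δ² / ‖u‖₂², where V_k(r) is the volume of the radius-r ball in ℂ^k (real dimension 2k). -/

import Mathlib

/-!
Rotate `ℂ^p` by a unitary map `T` with `⟪b, u⟫ = ‖u‖ · conj (T b)₀`. Lebesgue measure is
invariant under `T`, since a linear map that preserves the ball has `|det| = 1`, and so is the
ball. The event then says that `(T b)₀` lies in a disc of radius `δ / ‖u‖`, and the ball cut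
by this condition sits inside the product of that disc with the ball of `ℂ^(p-1)`, of volume
`π δ² / ‖u‖² · V_{p-1}(r)`.
-/

open scoped BigOperators Matrix

noncomputable def vnorm2 {m : ℕ} (x : Fin m → ℂ) : ℝ :=
  Real.sqrt (∑ i, ‖x i‖ ^ 2)

noncomputable def vnorm1 {m : ℕ} (x : Fin m → ℂ) : ℝ :=
  ∑ i, ‖x i‖

noncomputable def opnorm2 {m n : ℕ} (A : Matrix (Fin m) (Fin n) ℂ) : ℝ :=
  sSup {c | ∃ x : Fin n → ℂ, vnorm2 x = 1 ∧ c = vnorm2 (A.mulVec x)}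

noncomputable def opnorm1 {m n : ℕ} (A : Matrix (Fin m) (Fin n) ℂ) : ℝ :=
  sSup {c | ∃ x : Fin n → ℂ, vnorm1 x = 1 ∧ c = vnorm1 (A.mulVec x)}

noncomputable def frobNorm {m n : ℕ} (A : Matrix (Fin m) (Fin n) ℂ) : ℝ :=
  Real.sqrt (∑ i, ∑ j, ‖A i j‖ ^ 2)

def Dmat {m : ℕ} (P : Finset (Fin m)) : Matrix (Fin m) (Fin m) ℂ :=
  Matrix.diagonal (fun i => if i ∈ P then 1 else 0)

noncomputable def dft (m : ℕ) : Matrix (Fin m) (Fin m) ℂ :=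
  fun k l => (1 / Real.sqrt m : ℝ) *
    Complex.exp (-2 * Real.pi * Complex.I * (k.1 + 1) * (l.1 + 1) / m)

open MeasureTheory ProbabilityTheory

def ballC (p : ℕ) (r : ℝ) : Set (Fin p → ℂ) := {b | vnorm2 b ≤ r}

noncomputable def Vball (k : ℕ) (r : ℝ) : ℝ := (volume (ballC k r)).toReal

open scoped ENNReal ComplexConjugate

theorem cond_apply_le_ofReal_div {Ω : Type*} [MeasurableSpace Ω] {μ : Measure Ω} {s t : Set Ω}
    (hs : MeasurableSet s) (hμs : μ s ≠ ∞) {a : ℝ} (h : μ (s ∩ t) ≤ ENNReal.ofReal a) :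
    μ[t|s] ≤ ENNReal.ofReal (a / (μ s).toReal) := by
  rcases eq_or_ne (μ s) 0 with hμ0 | hμ0
  · simp [cond_eq_zero_of_meas_eq_zero hμ0]
  calc μ[t|s] = (μ s)⁻¹ * μ (s ∩ t) := cond_apply hs μ t
    _ ≤ (μ s)⁻¹ * ENNReal.ofReal a := by gcongr
    _ = ENNReal.ofReal (a / (μ s).toReal) := by
        rw [ENNReal.ofReal_div_of_pos (ENNReal.toReal_pos hμ0 hμs), ENNReal.ofReal_toReal hμs,
          ENNReal.div_eq_inv_mul]

theorem ContinuousLinearEquiv.addHaar_preimage_eq_of_preimage_eq {E : Type*}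
    [NormedAddCommGroup E] [NormedSpace ℝ E] [MeasurableSpace E] [BorelSpace E]
    [FiniteDimensional ℝ E] (μ : Measure E) [μ.IsAddHaarMeasure] (f : E ≃L[ℝ] E) {s : Set E}
    (hfs : f ⁻¹' s = s) (h0 : μ s ≠ 0) (htop : μ s ≠ ∞) (t : Set E) :
    μ (f ⁻¹' t) = μ t := by
  have hs := congrArg μ hfs
  rw [Measure.addHaar_preimage_continuousLinearEquiv, ENNReal.mul_eq_right h0 htop] at hs
  rw [Measure.addHaar_preimage_continuousLinearEquiv, hs, one_mul]

theorem exists_linearIsometryEquiv_apply_eq_inner {𝕜 ι : Type*} [RCLike 𝕜] [Fintype ι] (i₀ : ι)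
    {e : EuclideanSpace 𝕜 ι} (he : ‖e‖ = 1) :
    ∃ T : EuclideanSpace 𝕜 ι ≃ₗᵢ[𝕜] EuclideanSpace 𝕜 ι, ∀ x, T x i₀ = inner 𝕜 e x := by
  have hv : Orthonormal 𝕜 (({i₀} : Set ι).domRestrict fun _ => e) :=
    ⟨fun _ => he, fun i j hij => absurd (Subsingleton.elim i j) hij⟩
  obtain ⟨B, hB⟩ := hv.exists_orthonormalBasis_extension_of_card_eq (by simp)
  exact ⟨B.repr, fun x => by rw [B.repr_apply_apply, hB i₀ rfl]⟩

theorem volume_setOf_norm_mul_conj_add_lt_le {n : ℝ} (hn : 0 < n) (v : ℂ) (δ : ℝ) :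
    volume {z : ℂ | ‖n * conj z + v‖ < δ} ≤ ENNReal.ofReal (Real.pi * (δ / n) ^ 2) := by
  have hsub : {z : ℂ | ‖n * conj z + v‖ < δ} ⊆ Metric.ball (-conj v / n) (δ / n) := by
    intro z hz
    have hnorm : ‖n * conj z + v‖ = n * dist z (-conj v / n) := by
      rw [Complex.dist_eq, ← Complex.norm_conj, map_add, map_mul, Complex.conj_conj,
        Complex.conj_ofReal]
      have hfactor : (n : ℂ) * z + conj v = n * (z - -conj v / n) := by
        rw [mul_sub, mul_div_cancel₀ _ (Complex.ofReal_ne_zero.2 hn.ne'), sub_neg_eq_add]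
      rw [hfactor, norm_mul, Complex.norm_real, Real.norm_of_nonneg hn.le]
    rw [Metric.mem_ball, lt_div_iff₀ hn, mul_comm, ← hnorm]
    exact hz
  calc volume {z : ℂ | ‖n * conj z + v‖ < δ} ≤ volume (Metric.ball (-conj v / n) (δ / n)) :=
        measure_mono hsub
    _ ≤ volume (Metric.ball (-conj v / n) |δ / n|) :=
        measure_mono (Metric.ball_subset_ball (le_abs_self _))
    _ = ENNReal.ofReal (Real.pi * (δ / n) ^ 2) := by
        rw [Complex.volume_ball, ← ENNReal.ofReal_pow (abs_nonneg _), sq_abs, mul_comm,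
          ENNReal.ofReal_mul Real.pi_pos.le, ← NNReal.coe_real_pi, ENNReal.ofReal_coe_nnreal]

theorem vnorm2_eq_norm_toLp {m : ℕ} (x : Fin m → ℂ) : vnorm2 x = ‖WithLp.toLp 2 x‖ := by
  simp [vnorm2, EuclideanSpace.norm_eq]

theorem vnorm2_pos {m : ℕ} {x : Fin m → ℂ} (hx : x ≠ 0) : 0 < vnorm2 x := by
  rw [vnorm2_eq_norm_toLp, norm_pos_iff]
  exact fun h => hx (congrArg WithLp.ofLp h)

theorem continuous_vnorm2 (m : ℕ) : Continuous (vnorm2 : (Fin m → ℂ) → ℝ) :=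
  (continuous_norm.comp (PiLp.continuous_toLp 2 _)).congr fun x => (vnorm2_eq_norm_toLp x).symm

theorem measurableSet_ballC (k : ℕ) (r : ℝ) : MeasurableSet (ballC k r) :=
  (isClosed_Iic.preimage (continuous_vnorm2 k)).measurableSet

theorem volume_ballC_ne_top (k : ℕ) (r : ℝ) : volume (ballC k r) ≠ ∞ := by
  refine (Bornology.IsBounded.measure_lt_top ?_).ne
  refine (Metric.isBounded_iff_subset_closedBall 0).2 ⟨r, fun b hb => ?_⟩
  rw [mem_closedBall_zero_iff, pi_norm_le_iff_of_nonneg ((Real.sqrt_nonneg _).trans hb)]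
  intro i
  calc ‖b i‖ ≤ vnorm2 b := vnorm2_eq_norm_toLp b ▸ PiLp.norm_apply_le (WithLp.toLp 2 b) i
    _ ≤ r := hb

theorem volume_ballC_pos (k : ℕ) {r : ℝ} (hr : 0 < r) : 0 < volume (ballC k r) := by
  have hopen : IsOpen {b : Fin k → ℂ | vnorm2 b < r} := isOpen_Iio.preimage (continuous_vnorm2 k)
  have hne : ({b : Fin k → ℂ | vnorm2 b < r}).Nonempty := ⟨0, by simp [vnorm2, hr]⟩
  refine (hopen.measure_pos volume hne).trans_le (measure_mono fun b hb => ?_)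
  exact show vnorm2 b ≤ r from le_of_lt hb

theorem vnorm2_tail_le {q : ℕ} (c : Fin (q + 1) → ℂ) : vnorm2 (Fin.tail c) ≤ vnorm2 c := by
  unfold vnorm2
  gcongr
  rw [Fin.sum_univ_succ]
  exact le_add_of_nonneg_left (by positivity)

noncomputable def LinearIsometryEquiv.toPiCLE {ι : Type*} [Fintype ι]
    (T : EuclideanSpace ℂ ι ≃ₗᵢ[ℂ] EuclideanSpace ℂ ι) : (ι → ℂ) ≃L[ℝ] (ι → ℂ) :=
  ((PiLp.continuousLinearEquiv 2 ℝ fun _ => ℂ).symm.trans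
    (T.toContinuousLinearEquiv.restrictScalars ℝ)).trans (PiLp.continuousLinearEquiv 2 ℝ _)

theorem LinearIsometryEquiv.toPiCLE_apply {ι : Type*} [Fintype ι]
    (T : EuclideanSpace ℂ ι ≃ₗᵢ[ℂ] EuclideanSpace ℂ ι) (b : ι → ℂ) :
    T.toPiCLE b = (T (WithLp.toLp 2 b)).ofLp := rfl

theorem vnorm2_toPiCLE {k : ℕ} (T : EuclideanSpace ℂ (Fin k) ≃ₗᵢ[ℂ] EuclideanSpace ℂ (Fin k))
    (b : Fin k → ℂ) : vnorm2 (T.toPiCLE b) = vnorm2 b := by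
  rw [vnorm2_eq_norm_toLp, vnorm2_eq_norm_toLp, T.toPiCLE_apply, WithLp.toLp_ofLp, T.norm_map]

theorem preimage_toPiCLE_ballC {k : ℕ}
    (T : EuclideanSpace ℂ (Fin k) ≃ₗᵢ[ℂ] EuclideanSpace ℂ (Fin k)) (r : ℝ) :
    T.toPiCLE ⁻¹' ballC k r = ballC k r := by
  ext b
  simp only [ballC, Set.mem_preimage, Set.mem_ofPred_eq, vnorm2_toPiCLE]

theorem volume_preimage_toPiCLE {k : ℕ}
    (T : EuclideanSpace ℂ (Fin k) ≃ₗᵢ[ℂ] EuclideanSpace ℂ (Fin k)) (t : Set (Fin k → ℂ)) :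
    volume (T.toPiCLE ⁻¹' t) = volume t :=
  T.toPiCLE.addHaar_preimage_eq_of_preimage_eq volume (preimage_toPiCLE_ballC T 1)
    (volume_ballC_pos k one_pos).ne' (volume_ballC_ne_top k 1) t

theorem volume_ballC_succ_inter_le {q : ℕ} (r : ℝ) (S : Set ℂ) :
    volume (ballC (q + 1) r ∩ {c | c 0 ∈ S}) ≤ volume S * volume (ballC q r) := by
  let e := MeasurableEquiv.piFinSuccAbove (fun _ : Fin (q + 1) => ℂ) 0
  have hsub : ballC (q + 1) r ∩ {c | c 0 ∈ S} ⊆ e ⁻¹' (S ×ˢ ballC q r) :=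
    fun c ⟨hc, hcS⟩ => ⟨hcS, (vnorm2_tail_le c).trans hc⟩
  calc volume (ballC (q + 1) r ∩ {c | c 0 ∈ S}) ≤ volume (e ⁻¹' (S ×ˢ ballC q r)) :=
        measure_mono hsub
    _ = volume (S ×ˢ ballC q r) := by
        rw [← e.map_apply, (volume_preserving_piFinSuccAbove _ 0).map_eq]
    _ = volume S * volume (ballC q r) := by
        rw [Measure.volume_eq_prod, Measure.prod_prod]

theorem exists_sum_conj_mul_eq_vnorm2_mul {k : ℕ} (i₀ : Fin k) {u : Fin k → ℂ} (hu : u ≠ 0) :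
    ∃ T : EuclideanSpace ℂ (Fin k) ≃ₗᵢ[ℂ] EuclideanSpace ℂ (Fin k),
      ∀ b, ∑ i, conj (b i) * u i = vnorm2 u * conj (T.toPiCLE b i₀) := by
  have hn := vnorm2_pos hu
  have hu_eq : WithLp.toLp 2 u = (vnorm2 u : ℂ) • ((vnorm2 u : ℂ)⁻¹ • WithLp.toLp 2 u) := by
    rw [smul_smul, mul_inv_cancel₀ (Complex.ofReal_ne_zero.2 hn.ne'), one_smul]
  have he : ‖(vnorm2 u : ℂ)⁻¹ • WithLp.toLp 2 u‖ = 1 := by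
    rw [norm_smul, norm_inv, Complex.norm_real, Real.norm_of_nonneg hn.le, ← vnorm2_eq_norm_toLp,
      inv_mul_cancel₀ hn.ne']
  obtain ⟨T, hT⟩ := exists_linearIsometryEquiv_apply_eq_inner i₀ he
  refine ⟨T, fun b => ?_⟩
  have hsum : ∑ i, conj (b i) * u i = inner ℂ (WithLp.toLp 2 b) (WithLp.toLp 2 u) := by
    simp [PiLp.inner_apply, mul_comm]
  rw [hsum, hu_eq, inner_smul_right, T.toPiCLE_apply, hT, inner_conj_symm]

theorem stmt18_general {p : ℕ} (r : ℝ)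
    (u : Fin p → ℂ) (hu : u ≠ 0) (v : ℂ) (δ : ℝ) :
    (volume[|ballC p r]) {b : Fin p → ℂ |
        ‖(∑ i, (starRingEnd ℂ) (b i) * u i) + v‖ < δ}
      ≤ ENNReal.ofReal (Real.pi * Vball (p - 1) r / Vball p r * δ ^ 2 / vnorm2 u ^ 2) := by
  obtain ⟨q, rfl⟩ : ∃ q, p = q + 1 :=
    Nat.exists_eq_succ_of_ne_zero (by rintro rfl; exact hu (Subsingleton.elim _ _))
  obtain ⟨T, hT⟩ := exists_sum_conj_mul_eq_vnorm2_mul 0 hu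
  set D := {z : ℂ | ‖vnorm2 u * conj z + v‖ < δ}
  have hevent : ballC (q + 1) r ∩ {b | ‖(∑ i, conj (b i) * u i) + v‖ < δ} =
      T.toPiCLE ⁻¹' (ballC (q + 1) r ∩ {c | c 0 ∈ D}) := by
    rw [Set.preimage_inter, preimage_toPiCLE_ballC]
    simp only [hT]
    rfl
  have hbound : volume (ballC (q + 1) r ∩ {b | ‖(∑ i, conj (b i) * u i) + v‖ < δ}) ≤
      ENNReal.ofReal (Real.pi * (δ / vnorm2 u) ^ 2 * Vball q r) := by
    calc _ = volume (ballC (q + 1) r ∩ {c | c 0 ∈ D}) := by rw [hevent, volume_preimage_toPiCLE]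
      _ ≤ volume D * volume (ballC q r) := volume_ballC_succ_inter_le r D
      _ ≤ ENNReal.ofReal (Real.pi * (δ / vnorm2 u) ^ 2) * ENNReal.ofReal (Vball q r) := by
          rw [Vball, ENNReal.ofReal_toReal (volume_ballC_ne_top q r)]
          gcongr
          exact volume_setOf_norm_mul_conj_add_lt_le (vnorm2_pos hu) v δ
      _ = _ := (ENNReal.ofReal_mul (by positivity)).symm
  calc _ ≤ ENNReal.ofReal (Real.pi * (δ / vnorm2 u) ^ 2 * Vball q r / Vball (q + 1) r) :=
        cond_apply_le_ofReal_div (measurableSet_ballC _ r) (volume_ballC_ne_top _ r) hbound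
    _ = _ := by
        rw [Nat.add_sub_cancel, div_pow]
        ring_nf

theorem stmt18 {p : ℕ} (r : ℝ) (hr : 0 < r)
    (u : Fin p → ℂ) (hu : u ≠ 0) (v : ℂ) (δ : ℝ) (hδ : 0 < δ) :
    (volume[|ballC p r]) {b : Fin p → ℂ |
        ‖(∑ i, (starRingEnd ℂ) (b i) * u i) + v‖ < δ}
      ≤ ENNReal.ofReal (Real.pi * Vball (p - 1) r / Vball p r * δ ^ 2 / vnorm2 u ^ 2) :=
  stmt18_general r u hu v δ
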